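/- arXiv:2405.13453 — 4 statements merged into one kernel-verified Lean document; each statement's English description precedes it below -/
import Mathlib

section
/- Let y₁, …, yₙ ∈ ℝ^d and let ȳ = (1/n)∑ᵢ yᵢ. If max_i ‖yᵢ − ȳ‖ ≤ T, then ȳ is a minimizer of s ↦ ∑ᵢ φ(s, yᵢ), where φ is the Huber loss with threshold T. Moreover it is the unique minimizer. -/
noncomputable def huber {d : ℕ} (T : ℝ) (s y : EuclideanSpace ℝ (Fin d)) : ℝ :=
  if ‖s - y‖ ≤ T then ‖s - y‖ ^ 2 / 2 else T * ‖s - y‖ - T ^ 2 / 2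

open scoped RealInnerProductSpace

set_option maxHeartbeats 1000000 in
lemma huber_lb {d : ℕ} (T : ℝ) (hT : 0 < T) (s y ybar : EuclideanSpace ℝ (Fin d))
    (hv : ‖ybar - y‖ ≤ T) :
    ‖ybar - y‖ ^ 2 / 2 + ⟪s - ybar, ybar - y⟫ ≤ huber T s y ∧
    (huber T s y = ‖ybar - y‖ ^ 2 / 2 + ⟪s - ybar, ybar - y⟫ →
      0 ≤ ⟪s - ybar, ybar - y⟫ ∧ (⟪s - ybar, ybar - y⟫ = 0 → s = ybar)) := by
  set u := s - y with hu
  set v := ybar - y with hv'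
  have huv : s - ybar = u - v := by rw [hu, hv']; abel
  rw [huber, huv]
  have hinner : ⟪u - v, v⟫ = ⟪u, v⟫ - ‖v‖ ^ 2 := by
    rw [inner_sub_left, real_inner_self_eq_norm_sq]
  have hcs : ⟪u, v⟫ ≤ ‖u‖ * ‖v‖ := real_inner_le_norm u v
  have hnorm : ‖u - v‖ ^ 2 = ‖u‖ ^ 2 - 2 * ⟪u, v⟫ + ‖v‖ ^ 2 := norm_sub_sq_real u v
  have hv0 : 0 ≤ ‖v‖ := norm_nonneg v
  have hnn : 0 ≤ ‖u - v‖ ^ 2 := sq_nonneg _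
  by_cases h : ‖u‖ ≤ T
  · rw [if_pos h]
    constructor
    · nlinarith
    · intro heq
      have huv0 : ‖u - v‖ ^ 2 = 0 := by nlinarith
      have huveq : u = v := by
        have := pow_eq_zero_iff (n := 2) (by norm_num) |>.mp huv0
        rwa [norm_eq_zero, sub_eq_zero] at this
      have hz : ⟪u - v, v⟫ = 0 := by rw [huveq, sub_self, inner_zero_left]
      refine ⟨hz.ge, fun _ => ?_⟩
      have : s - ybar = 0 := by rw [huv, huveq, sub_self]
      exact sub_eq_zero.mp this
  · rw [if_neg h]
    push_neg at h
    have hfac : 0 ≤ (T - ‖v‖) * (‖u‖ - (T + ‖v‖) / 2) :=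
      mul_nonneg (by linarith) (by linarith)
    constructor
    · nlinarith [hfac, hcs, hinner]
    · intro heq
      have h2 : (T - ‖v‖) * (‖u‖ - (T + ‖v‖) / 2) ≤ 0 := by nlinarith [hcs, hinner]
      have hfpos : 0 < ‖u‖ - (T + ‖v‖) / 2 := by linarith
      have hvT : ‖v‖ = T := by nlinarith
      have hiuv : ⟪u, v⟫ = T * ‖u‖ := by nlinarith
      have hpos : 0 < ⟪u - v, v⟫ := by rw [hinner]; nlinarith
      exact ⟨hpos.le, fun h0 => absurd h0 (ne_of_gt hpos)⟩

theorem huber_mean_is_unique_minimizer (d n : ℕ) (hn : 0 < n) (T : ℝ) (hT : 0 < T)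
    (y : Fin n → EuclideanSpace ℝ (Fin d))
    (ybar : EuclideanSpace ℝ (Fin d)) (hybar : ybar = (n : ℝ)⁻¹ • ∑ i, y i)
    (hZ : ∀ i, ‖y i - ybar‖ ≤ T) :
    (∀ s : EuclideanSpace ℝ (Fin d),
        ∑ i, huber T ybar (y i) ≤ ∑ i, huber T s (y i)) ∧
    (∀ s : EuclideanSpace ℝ (Fin d),
        ∑ i, huber T s (y i) = ∑ i, huber T ybar (y i) → s = ybar) := by
  have hZ' : ∀ i, ‖ybar - y i‖ ≤ T := fun i => by rw [norm_sub_rev]; exact hZ i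
  have hny : (n : ℝ) • ybar = ∑ i, y i := by
    rw [hybar, smul_smul, mul_inv_cancel₀ (by exact_mod_cast hn.ne' : (n : ℝ) ≠ 0), one_smul]
  have hsum0 : ∑ i, (ybar - y i) = 0 := by
    rw [Finset.sum_sub_distrib, Finset.sum_const, Finset.card_univ, Fintype.card_fin,
      ← hny, sub_eq_zero]
    exact (Nat.cast_smul_eq_nsmul ℝ n ybar).symm
  have hinner0 : ∀ s : EuclideanSpace ℝ (Fin d), ∑ i, ⟪s - ybar, ybar - y i⟫ = 0 := by
    intro s
    rw [← inner_sum, hsum0, inner_zero_right]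
  have hbar_eq : ∀ i, huber T ybar (y i) = ‖ybar - y i‖ ^ 2 / 2 := fun i => by
    rw [huber, if_pos (hZ' i)]
  have hlb : ∀ (s : EuclideanSpace ℝ (Fin d)) i,
      ‖ybar - y i‖ ^ 2 / 2 + ⟪s - ybar, ybar - y i⟫ ≤ huber T s (y i) :=
    fun s i => (huber_lb T hT s (y i) ybar (hZ' i)).1
  have hsum_lb : ∀ s : EuclideanSpace ℝ (Fin d),
      ∑ i, huber T ybar (y i) = ∑ i, (‖ybar - y i‖ ^ 2 / 2 + ⟪s - ybar, ybar - y i⟫) := by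
    intro s
    rw [Finset.sum_add_distrib, hinner0, add_zero]
    exact Finset.sum_congr rfl fun i _ => hbar_eq i
  constructor
  · intro s
    rw [hsum_lb s]
    exact Finset.sum_le_sum fun i _ => hlb s i
  · intro s heq
    rw [hsum_lb s] at heq
    have hterm : ∀ i ∈ Finset.univ, huber T s (y i)
        = ‖ybar - y i‖ ^ 2 / 2 + ⟪s - ybar, ybar - y i⟫ := by
      intro i hi
      exact ((Finset.sum_eq_sum_iff_of_le (fun i _ => hlb s i)).mp heq.symm i hi).symm
    have hnn : ∀ i ∈ Finset.univ, (0:ℝ) ≤ ⟪s - ybar, ybar - y i⟫ := fun i hi =>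
      ((huber_lb T hT s (y i) ybar (hZ' i)).2 (hterm i hi)).1
    have hzero : ∀ i ∈ Finset.univ, ⟪s - ybar, ybar - y i⟫ = 0 :=
      (Finset.sum_eq_zero_iff_of_nonneg hnn).mp (hinner0 s)
    let i0 : Fin n := ⟨0, hn⟩
    exact ((huber_lb T hT s (y i0) ybar (hZ' i0)).2 (hterm i0 (Finset.mem_univ i0))).2
      (hzero i0 (Finset.mem_univ i0))
end

section
/- Let y₁, …, yₙ ∈ ℝ^d, weights wᵢ ≥ 0 with ∑ᵢ wᵢ = 1, and thresholds Tᵢ > 0. Let ȳ = ∑ᵢ wᵢ yᵢ. If ‖yᵢ − ȳ‖ < Tᵢ for every i, then ȳ is a minimizer of s ↦ ∑ᵢ wᵢ φᵢ(s, yᵢ), where φᵢ is the Huber loss with threshold Tᵢ. -/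
lemma huber_key {d : ℕ} {T : ℝ} (s y c : EuclideanSpace ℝ (Fin d))
    (h : ‖c - y‖ ≤ T) :
    huber T c y + inner ℝ (c - y) (s - c) ≤ huber T s y := by
  have hc : huber T c y = ‖c - y‖ ^ 2 / 2 := if_pos h
  rw [hc]
  have hsc : s - c = (s - y) - (c - y) := by abel
  rw [hsc, inner_sub_right, real_inner_self_eq_norm_sq]
  have hin : (inner ℝ (c - y) (s - y) : ℝ) ≤ ‖c - y‖ * ‖s - y‖ := real_inner_le_norm _ _
  have hna : (0:ℝ) ≤ ‖c - y‖ := norm_nonneg _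
  unfold huber
  split_ifs with hb
  · have := norm_sub_sq_real (s - y) (c - y)
    nlinarith [sq_nonneg ‖(s - y) - (c - y)‖, this, real_inner_comm (s - y) (c - y)]
  · push_neg at hb
    nlinarith [hin, hna, hb, h]

theorem weighted_huber_mean_is_minimizer (d n : ℕ)
    (y : Fin n → EuclideanSpace ℝ (Fin d))
    (w : Fin n → ℝ) (hw : ∀ i, 0 ≤ w i) (hwsum : ∑ i, w i = 1)
    (T : Fin n → ℝ) (hT : ∀ i, 0 < T i)
    (ybar : EuclideanSpace ℝ (Fin d)) (hybar : ybar = ∑ i, w i • y i)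
    (hZ : ∀ i, ‖y i - ybar‖ < T i) :
    ∀ s : EuclideanSpace ℝ (Fin d),
      ∑ i, w i * huber (T i) ybar (y i) ≤ ∑ i, w i * huber (T i) s (y i) := by
  intro s
  have key : ∀ i ∈ Finset.univ,
      w i * (huber (T i) ybar (y i) + inner ℝ (ybar - y i) (s - ybar)) ≤
        w i * huber (T i) s (y i) := by
    intro i _
    apply mul_le_mul_of_nonneg_left _ (hw i)
    apply huber_key
    rw [norm_sub_rev]
    exact (hZ i).le
  have h0 : ∑ i, w i * (inner ℝ (ybar - y i) (s - ybar) : ℝ) = 0 := by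
    have h1 : ∑ i, w i * (inner ℝ (ybar - y i) (s - ybar) : ℝ) =
        inner ℝ (∑ i, w i • (ybar - y i)) (s - ybar) := by
      rw [sum_inner]
      exact Finset.sum_congr rfl fun i _ => (real_inner_smul_left _ _ _).symm
    rw [h1]
    have h2 : (∑ i, w i • (ybar - y i)) = 0 := by
      simp only [smul_sub, Finset.sum_sub_distrib, ← Finset.sum_smul, hwsum, one_smul]
      rw [← hybar, sub_self]
    rw [h2, inner_zero_left]
  calc ∑ i, w i * huber (T i) ybar (y i)
      = ∑ i, w i * (huber (T i) ybar (y i) + inner ℝ (ybar - y i) (s - ybar)) := by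
        simp only [mul_add, Finset.sum_add_distrib, h0, add_zero]
    _ ≤ ∑ i, w i * huber (T i) s (y i) := Finset.sum_le_sum key
end

section
/- Let f : Ω → ℝ^d be a function on datasets and suppose S is a β-smooth sensitivity of f, meaning (1) S(D) ≥ LS_f(D) := sup over adjacent D' of ‖f(D) − f(D')‖ for all D, and (2) S(D) ≤ e^β S(D') for all adjacent D, D'. If G : Ω × ℕ → ℝ satisfies LS_f(D) ≤ G(D, 0) for all D and G(D, k) ≤ G(D', k+1) for all adjacent D, D' and all k ∈ ℕ, and G is uniformly bounded, then S(D) := sup_k e^{−βk} G(D, k) is a β-smooth sensitivity of f. -/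
/-- Local sensitivity of `f` at dataset `D` w.r.t. an adjacency relation. -/
noncomputable def localSens {Ω : Type*} {d : ℕ} (adj : Ω → Ω → Prop)
    (f : Ω → EuclideanSpace ℝ (Fin d)) (D : Ω) : ℝ :=
  sSup {r : ℝ | ∃ D', adj D D' ∧ r = ‖f D - f D'‖}

theorem smooth_sensitivity_from_G {Ω : Type*} {d : ℕ}
    (adj : Ω → Ω → Prop) (hsymm : ∀ D D', adj D D' → adj D' D)
    (f : Ω → EuclideanSpace ℝ (Fin d)) (β : ℝ) (hβ : 0 < β)
    (G : Ω → ℕ → ℝ)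
    (hbdd : ∃ B : ℝ, ∀ D k, |G D k| ≤ B)
    (hG0 : ∀ D, localSens adj f D ≤ G D 0)
    (hGadj : ∀ D D', adj D D' → ∀ k : ℕ, G D k ≤ G D' (k + 1)) :
    (∀ D, localSens adj f D ≤ ⨆ k : ℕ, Real.exp (-β * k) * G D k) ∧
    (∀ D D', adj D D' →
      (⨆ k : ℕ, Real.exp (-β * k) * G D k) ≤
        Real.exp β * ⨆ k : ℕ, Real.exp (-β * k) * G D' k) := by
  obtain ⟨B, hB⟩ := hbdd
  have hbdd' : ∀ D : Ω, BddAbove (Set.range fun k : ℕ => Real.exp (-β * k) * G D k) := by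
    intro D
    refine ⟨B, ?_⟩
    rintro _ ⟨k, rfl⟩
    have h1 : Real.exp (-β * k) ≤ 1 := by
      rw [Real.exp_le_one_iff]
      have : (0:ℝ) ≤ β * k := mul_nonneg hβ.le (Nat.cast_nonneg k)
      linarith
    have h2 : Real.exp (-β * k) * G D k ≤ Real.exp (-β * k) * |G D k| :=
      mul_le_mul_of_nonneg_left (le_abs_self _) (Real.exp_pos _).le
    calc Real.exp (-β * k) * G D k ≤ Real.exp (-β * k) * |G D k| := h2
      _ ≤ 1 * B := mul_le_mul h1 (hB D k) (abs_nonneg _) one_pos.le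
      _ = B := one_mul B
  constructor
  · intro D
    calc localSens adj f D ≤ G D 0 := hG0 D
      _ = Real.exp (-β * (0:ℕ)) * G D 0 := by simp
      _ ≤ _ := le_ciSup (hbdd' D) 0
  · intro D D' hadj
    refine ciSup_le fun k => ?_
    have h1 : Real.exp (-β * k) * G D k ≤ Real.exp (-β * k) * G D' (k + 1) :=
      mul_le_mul_of_nonneg_left (hGadj D D' hadj k) (Real.exp_pos _).le
    have h2 : Real.exp (-β * k) * G D' (k + 1) =
        Real.exp β * (Real.exp (-β * (k + 1 : ℕ)) * G D' (k + 1)) := by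
      rw [← mul_assoc, ← Real.exp_add]
      push_cast
      ring_nf
    have h3 : Real.exp (-β * (k + 1 : ℕ)) * G D' (k + 1) ≤
        ⨆ j : ℕ, Real.exp (-β * j) * G D' j := le_ciSup (hbdd' D') (k + 1)
    calc Real.exp (-β * k) * G D k ≤ Real.exp (-β * k) * G D' (k + 1) := h1
      _ = Real.exp β * (Real.exp (-β * (k + 1 : ℕ)) * G D' (k + 1)) := h2
      _ ≤ Real.exp β * ⨆ j : ℕ, Real.exp (-β * j) * G D' j :=
          mul_le_mul_of_nonneg_left h3 (Real.exp_pos _).le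
end

section
/- Let y₁, …, yₙ ∈ ℝ^d, ȳ their average, Z = max_i ‖yᵢ − ȳ‖, and let φ be Huber loss with threshold T. Suppose Z < (1 − 2k/n)T for some integer 1 ≤ k < n. Then for any y₁', …, yₖ' ∈ ℝ^d, the minimizer μ' of s ↦ ∑_{i≤k} φ(s, yᵢ') + ∑_{i>k} φ(s, yᵢ) satisfies ‖μ' − ȳ‖ ≤ k(T + Z)/(n − k). -/
noncomputable def hpsi {d : ℕ} (T : ℝ) (a : EuclideanSpace ℝ (Fin d)) : EuclideanSpace ℝ (Fin d) :=
  if ‖a‖ ≤ T then a else (T / ‖a‖) • a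

lemma huber_scalar_large {T α β c : ℝ} (hT : 0 < T) (hαT : T < α) (hcs : c ≤ α * β)
    (hβ : 0 ≤ β) :
    (if β ≤ T then β ^ 2 / 2 else T * β - T ^ 2 / 2) ≤
      (T * α - T ^ 2 / 2) + (T / α * c - T / α * α ^ 2) + (β ^ 2 - 2 * c + α ^ 2) / 2 := by
  have hα : 0 < α := lt_trans hT hαT
  have hq : T / α * c * α = T * c := by field_simp
  have hq2 : T / α * α ^ 2 = T * α := by field_simp
  rw [hq2]
  split_ifs with h1
  · rw [← sub_nonneg]
    have key : ((T * α - T ^ 2 / 2) + (T / α * c - T * α) + (β ^ 2 - 2 * c + α ^ 2) / 2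
        - β ^ 2 / 2) = ((α - T) * (α * (α + T) / 2 - c)) / α := by
      field_simp; ring
    rw [key]
    apply div_nonneg _ hα.le
    apply mul_nonneg (by linarith)
    nlinarith
  · push_neg at h1
    rw [← sub_nonneg]
    have key : ((T * α - T ^ 2 / 2) + (T / α * c - T * α) + (β ^ 2 - 2 * c + α ^ 2) / 2
        - (T * β - T ^ 2 / 2)) = ((α - T) * (α * β - c) + α * (β - α) ^ 2 / 2) / α := by
      field_simp; ring
    rw [key]
    apply div_nonneg _ hα.le
    have : 0 ≤ (α - T) * (α * β - c) := mul_nonneg (by linarith) (by linarith)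
    nlinarith [sq_nonneg (β - α)]

lemma huber_descent {d : ℕ} {T : ℝ} (hT : 0 < T) (s s' y : EuclideanSpace ℝ (Fin d)) :
    huber T s' y ≤ huber T s y + (inner ℝ (hpsi T (s - y)) (s' - s) : ℝ) + ‖s' - s‖ ^ 2 / 2 := by
  set a := s - y with ha
  set b := s' - y with hb
  have hba : s' - s = b - a := by rw [ha, hb]; abel
  have hsq : ‖b - a‖ ^ 2 = ‖b‖ ^ 2 - 2 * (inner ℝ a b : ℝ) + ‖a‖ ^ 2 := by
    rw [norm_sub_sq_real]; ring_nf; rw [real_inner_comm]; ring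
  have hcs : (inner ℝ a b : ℝ) ≤ ‖a‖ * ‖b‖ := real_inner_le_norm a b
  have hb0 : (0:ℝ) ≤ ‖b‖ := norm_nonneg b
  have ha0 : (0:ℝ) ≤ ‖a‖ := norm_nonneg a
  unfold huber hpsi
  rw [← ha, ← hb, hba]
  by_cases h2 : ‖a‖ ≤ T
  · rw [if_pos h2, if_pos h2, inner_sub_right, real_inner_self_eq_norm_sq]
    split_ifs with h1
    · nlinarith [hsq]
    · push_neg at h1
      nlinarith [hsq, sq_nonneg (‖b‖ - T)]
  · push_neg at h2
    simp only [if_neg (not_le.2 h2)]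
    rw [inner_sub_right,
      real_inner_smul_left, real_inner_smul_left, real_inner_self_eq_norm_sq, hsq]
    exact huber_scalar_large hT h2 hcs hb0

lemma hpsi_norm_le {d : ℕ} {T : ℝ} (hT : 0 ≤ T) (a : EuclideanSpace ℝ (Fin d)) :
    ‖hpsi T a‖ ≤ T := by
  unfold hpsi
  split_ifs with h
  · exact h
  · push_neg at h
    have ha : 0 < ‖a‖ := lt_of_le_of_lt hT h
    rw [norm_smul, Real.norm_eq_abs, abs_of_nonneg (div_nonneg hT ha.le)]
    field_simp
    exact le_rfl

lemma hpsi_eqq {d : ℕ} {T : ℝ} {a : EuclideanSpace ℝ (Fin d)} (h : ‖a‖ ≤ T) :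
    hpsi T a = a := if_pos h

lemma hpsi_sub_norm {d : ℕ} {T : ℝ} (hT : 0 ≤ T) (a : EuclideanSpace ℝ (Fin d)) :
    ‖a - hpsi T a‖ = max 0 (‖a‖ - T) := by
  unfold hpsi
  split_ifs with h
  · simp [max_eq_left, sub_nonpos.2 h]
  · push_neg at h
    have ha : 0 < ‖a‖ := lt_of_le_of_lt hT h
    have h2 : a - (T / ‖a‖) • a = (1 - T / ‖a‖) • a := by rw [sub_smul, one_smul]
    rw [h2, norm_smul, Real.norm_eq_abs, abs_of_nonneg]
    · rw [max_eq_right (by linarith)]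
      field_simp
    · rw [sub_nonneg, div_le_one ha]; exact h.le

set_option maxHeartbeats 1000000 in
/-- Modulus of continuity bound for the Huber minimizer after replacing the
first `k` of the `n` points. -/
theorem huber_minimizer_modulus (d n k : ℕ) (hk1 : 1 ≤ k) (hkn : k < n)
    (T : ℝ) (hT : 0 < T)
    (y : Fin n → EuclideanSpace ℝ (Fin d))
    (ybar : EuclideanSpace ℝ (Fin d)) (hybar : ybar = (n : ℝ)⁻¹ • ∑ i, y i)
    (Z : ℝ) (hZdef : IsGreatest {r : ℝ | ∃ i, r = ‖y i - ybar‖} Z)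
    (hZ : Z < (1 - 2 * (k : ℝ) / n) * T)
    (y' : Fin n → EuclideanSpace ℝ (Fin d))
    (hy' : ∀ i : Fin n, k ≤ (i : ℕ) → y' i = y i)
    (μ' : EuclideanSpace ℝ (Fin d))
    (hmin : ∀ s : EuclideanSpace ℝ (Fin d),
      ∑ i, huber T μ' (y' i) ≤ ∑ i, huber T s (y' i)) :
    ‖μ' - ybar‖ ≤ (k : ℝ) * (T + Z) / ((n : ℝ) - k) := by
  have hn0 : 0 < n := lt_of_le_of_lt (Nat.zero_le k) hkn
  have hnR : (0:ℝ) < n := by positivity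
  -- basic facts about Z
  have hZub : ∀ i, ‖y i - ybar‖ ≤ Z := by
    intro i
    exact hZdef.2 ⟨i, rfl⟩
  have hZ0 : 0 ≤ Z := by
    obtain ⟨i, hi⟩ := hZdef.1
    rw [hi]; positivity
  have h2k : 2 * (k:ℝ) < n := by
    by_contra h
    push_neg at h
    have : (1 - 2 * (k : ℝ) / n) * T ≤ 0 := by
      apply mul_nonpos_of_nonpos_of_nonneg _ hT.le
      rw [sub_nonpos, le_div_iff₀ hnR]
      linarith
    linarith
  have hnZ : (n:ℝ) * Z < ((n:ℝ) - 2 * k) * T := by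
    have := (mul_lt_mul_iff_right₀ hnR).2 hZ
    calc (n:ℝ) * Z < n * ((1 - 2 * (k : ℝ) / n) * T) := this
      _ = ((n:ℝ) - 2 * k) * T := by field_simp
  -- the gradient vanishes
  set v : EuclideanSpace ℝ (Fin d) := ∑ i, hpsi T (μ' - y' i) with hv
  have hveq : v = 0 := by
    have hdesc : ∑ i, huber T (μ' - (n:ℝ)⁻¹ • v) (y' i) ≤
        ∑ i, huber T μ' (y' i) + (inner ℝ v (-((n:ℝ)⁻¹ • v)) : ℝ)
          + n * (‖-((n:ℝ)⁻¹ • v)‖ ^ 2 / 2) := by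
      have h1 : ∀ i : Fin n, huber T (μ' - (n:ℝ)⁻¹ • v) (y' i) ≤
          huber T μ' (y' i) + (inner ℝ (hpsi T (μ' - y' i)) (-((n:ℝ)⁻¹ • v)) : ℝ)
            + ‖-((n:ℝ)⁻¹ • v)‖ ^ 2 / 2 := by
        intro i
        have := huber_descent hT μ' (μ' - (n:ℝ)⁻¹ • v) (y' i)
        have he : μ' - (n:ℝ)⁻¹ • v - μ' = -((n:ℝ)⁻¹ • v) := by abel
        rwa [he] at this
      calc ∑ i, huber T (μ' - (n:ℝ)⁻¹ • v) (y' i)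
          ≤ ∑ i, (huber T μ' (y' i) + (inner ℝ (hpsi T (μ' - y' i)) (-((n:ℝ)⁻¹ • v)) : ℝ)
            + ‖-((n:ℝ)⁻¹ • v)‖ ^ 2 / 2) := Finset.sum_le_sum (fun i _ => h1 i)
        _ = ∑ i, huber T μ' (y' i) + (inner ℝ v (-((n:ℝ)⁻¹ • v)) : ℝ)
            + n * (‖-((n:ℝ)⁻¹ • v)‖ ^ 2 / 2) := by
            rw [Finset.sum_add_distrib, Finset.sum_add_distrib, ← sum_inner,
              Finset.sum_const, Finset.card_univ, Fintype.card_fin]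
            simp [nsmul_eq_mul, hv]
    have hm := hmin (μ' - (n:ℝ)⁻¹ • v)
    have hinner : (inner ℝ v (-((n:ℝ)⁻¹ • v)) : ℝ) = -((n:ℝ)⁻¹ * ‖v‖^2) := by
      rw [inner_neg_right, real_inner_smul_right, real_inner_self_eq_norm_sq]
    have hnorm : ‖-((n:ℝ)⁻¹ • v)‖ ^ 2 = (n:ℝ)⁻¹^2 * ‖v‖^2 := by
      rw [norm_neg, norm_smul]
      simp [mul_pow]
    have hvsq : ‖v‖^2 ≤ 0 := by
      rw [hinner, hnorm] at hdesc
      have hcomb := le_trans hm hdesc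
      have hne : (n:ℝ) * ((n:ℝ)⁻¹^2 * ‖v‖^2 / 2) = (n:ℝ)⁻¹ * ‖v‖^2/2 := by
        field_simp
      rw [hne] at hcomb
      nlinarith [sq_nonneg ‖v‖, inv_pos.2 hnR]
    have : ‖v‖ = 0 := by nlinarith [norm_nonneg v]
    exact norm_eq_zero.1 this
  -- split indices
  set G : Finset (Fin n) := Finset.univ.filter (fun i : Fin n => k ≤ (i:ℕ)) with hG
  set Bd : Finset (Fin n) := Finset.univ.filter (fun i : Fin n => ¬ k ≤ (i:ℕ)) with hBd
  have hBdcard : Bd.card = k := by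
    have : Bd = Finset.Iio (⟨k, hkn⟩ : Fin n) := by
      ext i
      simp [hBd, Fin.lt_def, not_le]
    rw [this, Fin.card_Iio]
  have hGcard : G.card = n - k := by
    have h1 : G.card + Bd.card = n := by
      rw [hG, hBd, Finset.card_filter_add_card_filter_not, Finset.card_univ,
        Fintype.card_fin]
    omega
  have hmcast : ((n - k : ℕ):ℝ) = (n:ℝ) - k := by
    push_cast [Nat.cast_sub hkn.le]
    ring
  have hmpos : (0:ℝ) < (n:ℝ) - k := by
    have : (k:ℝ) < n := by exact_mod_cast hkn
    linarith
  set R := ‖μ' - ybar‖ with hR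
  -- sum of all deviations is zero
  have hsumy : ∑ i, (y i - ybar) = 0 := by
    have hyb : (n:ℝ) • ybar = ∑ i, y i := by
      rw [hybar, smul_smul, mul_inv_cancel₀ (ne_of_gt hnR), one_smul]
    rw [Finset.sum_sub_distrib, Finset.sum_const, Finset.card_univ, Fintype.card_fin,
      ← Nat.cast_smul_eq_nsmul ℝ, hyb, sub_self]
  have hGsplit : ∀ f : Fin n → EuclideanSpace ℝ (Fin d),
      ∑ i ∈ G, f i + ∑ i ∈ Bd, f i = ∑ i, f i := by
    intro f
    rw [hG, hBd, Finset.sum_filter_add_sum_filter_not]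
  -- key identity
  have hkey : ((n - k : ℕ):ℝ) • (μ' - ybar) = ∑ i ∈ G, (μ' - y i) - ∑ i ∈ Bd, (y i - ybar) := by
    have h1 : ∑ i ∈ G, (μ' - y i) = G.card • (μ' - ybar) - ∑ i ∈ G, (y i - ybar) := by
      have he : ∀ i : Fin n, μ' - y i = (μ' - ybar) - (y i - ybar) := fun i => by abel
      rw [Finset.sum_congr rfl (fun i _ => he i), Finset.sum_sub_distrib, Finset.sum_const]
    have h2 : ∑ i ∈ G, (y i - ybar) = - ∑ i ∈ Bd, (y i - ybar) := by
      have := hGsplit (fun i => y i - ybar)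
      rw [hsumy] at this
      linear_combination (norm := module) this
    rw [h1, h2, hGcard, ← Nat.cast_smul_eq_nsmul ℝ]
    abel
  -- bad sums are small
  have hBdZ : ‖∑ i ∈ Bd, (y i - ybar)‖ ≤ k * Z := by
    calc ‖∑ i ∈ Bd, (y i - ybar)‖ ≤ ∑ i ∈ Bd, ‖y i - ybar‖ := norm_sum_le _ _
      _ ≤ Bd.card • Z := Finset.sum_le_card_nsmul _ _ _ (fun i _ => hZub i)
      _ = k * Z := by rw [hBdcard, nsmul_eq_mul]
  have hGpsi : ‖∑ i ∈ G, hpsi T (μ' - y i)‖ ≤ k * T := by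
    have hsplitv := hGsplit (fun i => hpsi T (μ' - y' i))
    rw [← hv, hveq] at hsplitv
    have hGy : ∑ i ∈ G, hpsi T (μ' - y' i) = ∑ i ∈ G, hpsi T (μ' - y i) := by
      apply Finset.sum_congr rfl
      intro i hi
      rw [hG, Finset.mem_filter] at hi
      rw [hy' i hi.2]
    have heq : ∑ i ∈ G, hpsi T (μ' - y i) = - ∑ i ∈ Bd, hpsi T (μ' - y' i) := by
      rw [← hGy]
      linear_combination (norm := module) hsplitv
    rw [heq, norm_neg]
    calc ‖∑ i ∈ Bd, hpsi T (μ' - y' i)‖ ≤ ∑ i ∈ Bd, ‖hpsi T (μ' - y' i)‖ := norm_sum_le _ _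
      _ ≤ Bd.card • T := Finset.sum_le_card_nsmul _ _ _ (fun i _ => hpsi_norm_le hT.le _)
      _ = k * T := by rw [hBdcard, nsmul_eq_mul]
  -- the chain inequality
  have hchain : ((n:ℝ) - k) * R ≤ k * T + k * Z
      + ∑ i ∈ G, ‖(μ' - y i) - hpsi T (μ' - y i)‖ := by
    have h1 : ((n:ℝ) - k) * R = ‖((n - k : ℕ):ℝ) • (μ' - ybar)‖ := by
      rw [norm_smul, hmcast, Real.norm_eq_abs, abs_of_pos hmpos]
    have h2 : ∑ i ∈ G, (μ' - y i) = ∑ i ∈ G, hpsi T (μ' - y i)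
        + ∑ i ∈ G, ((μ' - y i) - hpsi T (μ' - y i)) := by
      rw [← Finset.sum_add_distrib]
      apply Finset.sum_congr rfl
      intro i _
      abel
    rw [h1, hkey, h2]
    calc ‖∑ i ∈ G, hpsi T (μ' - y i) + ∑ i ∈ G, ((μ' - y i) - hpsi T (μ' - y i))
        - ∑ i ∈ Bd, (y i - ybar)‖
        ≤ ‖∑ i ∈ G, hpsi T (μ' - y i)‖ + ‖∑ i ∈ G, ((μ' - y i) - hpsi T (μ' - y i))‖
          + ‖∑ i ∈ Bd, (y i - ybar)‖ := by
          apply le_trans (norm_sub_le _ _)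
          gcongr
          exact norm_add_le _ _
      _ ≤ k * T + ∑ i ∈ G, ‖(μ' - y i) - hpsi T (μ' - y i)‖ + k * Z := by
          gcongr
          exact norm_sum_le _ _
      _ = k * T + k * Z + ∑ i ∈ G, ‖(μ' - y i) - hpsi T (μ' - y i)‖ := by ring
  -- each distance to threshold
  have haRZ : ∀ i, ‖μ' - y i‖ ≤ R + Z := by
    intro i
    calc ‖μ' - y i‖ = ‖(μ' - ybar) + (ybar - y i)‖ := by congr 1; abel
      _ ≤ ‖μ' - ybar‖ + ‖ybar - y i‖ := norm_add_le _ _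
      _ ≤ R + Z := by
          have h3 : ‖ybar - y i‖ ≤ Z := by rw [norm_sub_rev ybar (y i)]; exact hZub i
          exact add_le_add le_rfl h3
  -- all good points are within threshold
  have hsmall : ∀ i ∈ G, ‖μ' - y i‖ ≤ T := by
    by_contra hcon
    push_neg at hcon
    obtain ⟨i₀, hi₀G, hi₀⟩ := hcon
    set B2 : Finset (Fin n) := G.filter (fun i => T < ‖μ' - y i‖) with hB2
    have hbG : B2 ⊆ G := Finset.filter_subset _ _
    have hb1 : 1 ≤ B2.card := by
      rw [Nat.one_le_iff_ne_zero, ← Nat.pos_iff_ne_zero, Finset.card_pos]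
      exact ⟨i₀, Finset.mem_filter.2 ⟨hi₀G, hi₀⟩⟩
    have hbm : B2.card ≤ n - k := hGcard ▸ Finset.card_le_card hbG
    have hRZT : T < R + Z := lt_of_lt_of_le hi₀ (haRZ i₀)
    have hDb : ∑ i ∈ G, ‖(μ' - y i) - hpsi T (μ' - y i)‖ ≤ B2.card * (R + Z - T) := by
      have hsplit2 : ∑ i ∈ G, ‖(μ' - y i) - hpsi T (μ' - y i)‖
          = ∑ i ∈ B2, ‖(μ' - y i) - hpsi T (μ' - y i)‖
            + ∑ i ∈ G.filter (fun i => ¬ T < ‖μ' - y i‖), ‖(μ' - y i) - hpsi T (μ' - y i)‖ := by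
        rw [hB2, Finset.sum_filter_add_sum_filter_not]
      have hzero : ∑ i ∈ G.filter (fun i => ¬ T < ‖μ' - y i‖),
          ‖(μ' - y i) - hpsi T (μ' - y i)‖ = 0 := by
        apply Finset.sum_eq_zero
        intro i hi
        rw [Finset.mem_filter] at hi
        push_neg at hi
        rw [hpsi_eqq hi.2, sub_self, norm_zero]
      rw [hsplit2, hzero, add_zero]
      calc ∑ i ∈ B2, ‖(μ' - y i) - hpsi T (μ' - y i)‖
          ≤ B2.card • (R + Z - T) := by
            apply Finset.sum_le_card_nsmul
            intro i hi
            rw [hpsi_sub_norm hT.le]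
            rw [max_le_iff]
            constructor
            · linarith
            · linarith [haRZ i]
        _ = B2.card * (R + Z - T) := nsmul_eq_mul _ _
    have hbmR : (B2.card : ℝ) ≤ (n:ℝ) - k := by
      rw [← hmcast]; exact_mod_cast hbm
    have hb1R : (1:ℝ) ≤ (B2.card : ℝ) := by exact_mod_cast hb1
    have hRgt : T - Z < R := by linarith
    nlinarith [mul_nonneg (by linarith : (0:ℝ) ≤ (n:ℝ) - k - B2.card)
      (by linarith : (0:ℝ) ≤ R - (T - Z)), hchain, hDb, hnZ]
  -- so the defect sum vanishes
  have hD0 : ∑ i ∈ G, ‖(μ' - y i) - hpsi T (μ' - y i)‖ = 0 := by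
    apply Finset.sum_eq_zero
    intro i hi
    rw [hpsi_eqq (hsmall i hi), sub_self, norm_zero]
  rw [hD0, add_zero] at hchain
  rw [le_div_iff₀ hmpos]
  nlinarith [hchain]
end
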